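/- arXiv:2206.09673 — 7 statements merged into one kernel-verified Lean document; each statement's English description precedes it below -/
import Mathlib

section
/- For any nonadditive measure μ, measurable f : X → [0,∞), and scalar α ≥ 0, the Sugeno integral satisfies Su(μ, α·f) ≤ max(1, α) · Su(μ, f) (truncated subhomogeneity). -/
open scoped NNReal ENNReal
open ENNReal Filter Topology

variable {X : Type*} [MeasurableSpace X]

/-- The Sugeno integral of `g` w.r.t. a nonadditive measure `μ`:
`Su(μ,g) := sup_{t ∈ [0,∞)} min(t, μ({g > t}))`. -/
noncomputable def Su (μ : Set X → ℝ≥0∞) (g : X → ℝ≥0∞) : ℝ≥0∞ :=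
  ⨆ t : ℝ≥0, min (t : ℝ≥0∞) (μ {x | (t : ℝ≥0∞) < g x})

/-!
Scaling `g` by `α ≠ 0` turns the level set `{α g > t}` into `{g > t / α}`, so each term of the
supremum for `α g` has the form `min (α s) m` with `min s m` a term of the supremum for `g`; and
`min (α s) m ≤ max 1 α * min s m`. For `α = 0` every level set of `α g` is empty and `μ ∅ = 0`.
-/

namespace ENNReal

theorem min_mul_le_max_one_mul (a s m : ℝ≥0∞) : min (a * s) m ≤ max 1 a * min s m := by
  rcases le_total s m with h | h
  · rw [min_eq_left h]
    exact (min_le_left _ _).trans (mul_le_mul_left (le_max_right _ _) _)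
  · rw [min_eq_right h]
    exact (min_le_right _ _).trans (le_mul_of_one_le_left' (le_max_left _ _))

theorem coe_eq_coe_mul_coe_div {α : ℝ≥0} (hα : α ≠ 0) (t : ℝ≥0) :
    (t : ℝ≥0∞) = α * ((t / α : ℝ≥0) : ℝ≥0∞) := by
  rw [← ENNReal.coe_mul, mul_div_cancel₀ t hα]

end ENNReal

section

variable {Ω : Type*}

theorem setOf_coe_lt_const_mul {α : ℝ≥0} (hα : α ≠ 0) (t : ℝ≥0) (g : Ω → ℝ≥0∞) :
    {x | (t : ℝ≥0∞) < α * g x} = {x | ((t / α : ℝ≥0) : ℝ≥0∞) < g x} := by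
  ext x
  rw [Set.mem_ofPred_eq, Set.mem_ofPred_eq, coe_eq_coe_mul_coe_div hα t]
  exact ENNReal.mul_lt_mul_iff_right (coe_ne_zero.mpr hα) coe_ne_top

theorem min_le_Su (μ : Set Ω → ℝ≥0∞) (g : Ω → ℝ≥0∞) (t : ℝ≥0) :
    min (t : ℝ≥0∞) (μ {x | (t : ℝ≥0∞) < g x}) ≤ Su μ g :=
  le_iSup (fun u : ℝ≥0 => min (u : ℝ≥0∞) (μ {x | (u : ℝ≥0∞) < g x})) t

theorem Su_zero (μ : Set Ω → ℝ≥0∞) (h0 : μ ∅ = 0) : Su μ (fun _ => 0) = 0 := by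
  simp [Su, h0]

theorem Su_const_mul_le {α : ℝ≥0} (hα : α ≠ 0) (μ : Set Ω → ℝ≥0∞) (g : Ω → ℝ≥0∞) :
    Su μ (fun x => α * g x) ≤ max 1 (α : ℝ≥0∞) * Su μ g := by
  refine iSup_le fun t => ?_
  rw [setOf_coe_lt_const_mul hα, coe_eq_coe_mul_coe_div hα t]
  exact (min_mul_le_max_one_mul _ _ _).trans (mul_le_mul_right (min_le_Su μ g _) _)

end

theorem sugeno_truncated_subhomogeneous_general
    (μ : Set X → ℝ≥0∞) (h0 : μ ∅ = 0)
    (f : X → ℝ≥0) (α : ℝ≥0) :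
    Su μ (fun x => ((α : ℝ≥0∞) * (f x : ℝ≥0∞))) ≤
      max 1 (α : ℝ≥0∞) * Su μ (fun x => (f x : ℝ≥0∞)) := by
  rcases eq_or_ne α 0 with rfl | hα
  · simp only [ENNReal.coe_zero, zero_mul, Su_zero μ h0, zero_le]
  · exact Su_const_mul_le hα μ _

/-- Truncated subhomogeneity of the Sugeno integral: `Su(μ, α·f) ≤ max(1, α) · Su(μ, f)`. -/
theorem sugeno_truncated_subhomogeneous
    (μ : Set X → ℝ≥0∞) (h0 : μ ∅ = 0)
    (hmono : ∀ ⦃A B : Set X⦄, MeasurableSet A → MeasurableSet B → A ⊆ B → μ A ≤ μ B)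
    (f : X → ℝ≥0) (hf : Measurable f) (α : ℝ≥0) :
    Su μ (fun x => ((α : ℝ≥0∞) * (f x : ℝ≥0∞))) ≤
      max 1 (α : ℝ≥0∞) * Su μ (fun x => (f x : ℝ≥0∞)) :=
  sugeno_truncated_subhomogeneous_general μ h0 f α
end

section
/- For any nonadditive measure μ, measurable f : X → [0,∞), and 0 < p < ∞, the Sugeno integral satisfies the exponentiation identity Su(μ, f^p) = (Su(μ^{1/p}, f))^p, where μ^{1/p} is the nonadditive measure A ↦ μ(A)^{1/p}. -/
open scoped NNReal ENNReal
open ENNReal Filter Topology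

variable {X : Type*} [MeasurableSpace X]

/-- Exponentiation identity for the Sugeno integral: `Su(μ, f^p) = (Su(μ^{1/p}, f))^p`. -/
theorem sugeno_exponentiation
    (μ : Set X → ℝ≥0∞) (h0 : μ ∅ = 0)
    (hmono : ∀ ⦃A B : Set X⦄, MeasurableSet A → MeasurableSet B → A ⊆ B → μ A ≤ μ B)
    (f : X → ℝ≥0) (hf : Measurable f) (p : ℝ) (hp : 0 < p) :
    Su μ (fun x => (f x : ℝ≥0∞) ^ p) =
      (Su (fun A => μ A ^ (1 / p)) (fun x => (f x : ℝ≥0∞))) ^ p := by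
  have hp' : p ≠ 0 := hp.ne'
  set e := ENNReal.orderIsoRpow p hp with hedef
  have he : ∀ x : ℝ≥0∞, e x = x ^ p := fun x => ENNReal.orderIsoRpow_apply p hp x
  unfold Su
  rw [← he, e.map_iSup]
  have hsurj : Function.Surjective (fun s : ℝ≥0 => s ^ p) := fun t =>
    ⟨t ^ (1/p), by
      simp only []
      rw [← NNReal.rpow_mul, one_div_mul_cancel hp', NNReal.rpow_one]⟩
  rw [← hsurj.iSup_comp]
  refine iSup_congr fun s => ?_
  have h1 : ((s ^ p : ℝ≥0) : ℝ≥0∞) = (s : ℝ≥0∞) ^ p := ENNReal.coe_rpow_of_nonneg s hp.le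
  have hset : {x | ((s ^ p : ℝ≥0) : ℝ≥0∞) < (f x : ℝ≥0∞) ^ p} = {x | (s : ℝ≥0∞) < (f x : ℝ≥0∞)} := by
    ext x
    simp only [Set.mem_setOf_eq, h1, ENNReal.rpow_lt_rpow_iff hp]
  show _ = e _
  rw [hset, e.map_inf, he, he, h1, ← ENNReal.rpow_mul, one_div_mul_cancel hp', ENNReal.rpow_one]
end

section
/- Let μ be a nonadditive measure and 0 < p,q < ∞. For any measurable f, (f)_{p,q} = 0 if and only if μ({|f| > c}) = 0 for every c > 0. If moreover μ is null-continuous, these are equivalent to μ({|f| > 0}) = 0. -/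
open scoped NNReal ENNReal
open ENNReal Filter Topology

variable {X : Type*} [MeasurableSpace X]

/-- The Sugeno-Lorentz prenorm `(f)_{p,q} := (Su(μ^{p/q}, (p/q)|f|^q))^{1/q}`. -/
noncomputable def SL (μ : Set X → ℝ≥0∞) (p q : ℝ) (f : X → ℝ) : ℝ≥0∞ :=
  (Su (fun A => μ A ^ (p / q)) (fun x => ENNReal.ofReal ((p / q) * |f x| ^ q))) ^ (1 / q)

/-! The level sets of `(p/q)|f|^q` are level sets of `|f|` after the increasing bijection
`t ↦ (t/(p/q))^(1/q)` of `(0, ∞)`, so `(f)_{p,q} = 0` says exactly that every strict level set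
`{|f| > c}`, `c > 0`, is `μ`-null. Null-continuity applied to the increasing sets
`{|f| > 1/(n+1)}` then passes to `{|f| > 0}`, and monotonicity gives the converse. -/

def NullContinuous (μ : Set X → ℝ≥0∞) : Prop :=
  ∀ N : ℕ → Set X, (∀ n, MeasurableSet (N n)) → Monotone N →
    (∀ n, μ (N n) = 0) → μ (⋃ n, N n) = 0

theorem coe_lt_ofReal_mul_rpow_iff {r q a : ℝ} (hr : 0 < r) (hq : 0 < q) (ha : 0 ≤ a)
    (t : ℝ≥0) :
    (t : ℝ≥0∞) < ENNReal.ofReal (r * a ^ q) ↔ ((t : ℝ) / r) ^ (1 / q) < a := by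
  rw [ENNReal.lt_ofReal_iff_toReal_lt ENNReal.coe_ne_top, ENNReal.coe_toReal, mul_comm,
    ← div_lt_iff₀ hr, one_div, Real.rpow_inv_lt_iff_of_pos (by positivity) ha hq]

section

variable {α : Type*} (μ : Set α → ℝ≥0∞)

theorem Su_eq_zero_iff (g : α → ℝ≥0∞) :
    Su μ g = 0 ↔ ∀ t : ℝ≥0, 0 < t → μ {x | (t : ℝ≥0∞) < g x} = 0 := by
  simp only [Su, ENNReal.iSup_eq_zero, min_eq_zero, ENNReal.coe_eq_zero]
  exact forall_congr' fun t => by rw [or_iff_not_imp_left, pos_iff_ne_zero]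

theorem SL_eq_zero_iff_Su_eq_zero (p : ℝ) {q : ℝ} (hq : 0 < q) (f : α → ℝ) :
    SL μ p q f = 0 ↔
      Su (fun A => μ A ^ (p / q)) (fun x => ENNReal.ofReal ((p / q) * |f x| ^ q)) = 0 :=
  ENNReal.rpow_eq_zero_iff_of_pos (one_div_pos.mpr hq)

theorem SL_eq_zero_iff_forall_measure_lt_abs_eq_zero {p q : ℝ} (hp : 0 < p) (hq : 0 < q)
    (f : α → ℝ) :
    SL μ p q f = 0 ↔ ∀ c : ℝ, 0 < c → μ {x | c < |f x|} = 0 := by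
  have hr : 0 < p / q := div_pos hp hq
  simp only [SL_eq_zero_iff_Su_eq_zero μ p hq, Su_eq_zero_iff,
    ENNReal.rpow_eq_zero_iff_of_pos hr, coe_lt_ofReal_mul_rpow_iff hr hq (abs_nonneg _)]
  refine ⟨fun h c hc => ?_, fun h t ht => h _ (by positivity)⟩
  have hc_eq : (((p / q * c ^ q).toNNReal : ℝ) / (p / q)) ^ (1 / q) = c := by
    rw [Real.coe_toNNReal _ (by positivity), mul_div_cancel_left₀ _ hr.ne', one_div,
      Real.rpow_rpow_inv hc.le hq.ne']
  simpa only [hc_eq] using h (p / q * c ^ q).toNNReal (Real.toNNReal_pos.mpr (by positivity))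

end

namespace NullContinuous

variable {μ : Set X → ℝ≥0∞} {g : X → ℝ}

theorem measure_setOf_pos_eq_zero (hμ : NullContinuous μ) (hg : Measurable g)
    (h : ∀ c : ℝ, 0 < c → μ {x | c < g x} = 0) : μ {x | 0 < g x} = 0 := by
  have hunion : (⋃ n : ℕ, {x | 1 / ((n : ℝ) + 1) < g x}) = {x | 0 < g x} := by
    ext x
    simp only [Set.mem_iUnion, Set.mem_ofPred_eq]
    exact ⟨fun ⟨n, hn⟩ => lt_trans Nat.one_div_pos_of_nat hn, exists_nat_one_div_lt⟩
  rw [← hunion]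
  exact hμ _ (fun n => measurableSet_lt measurable_const hg)
    (fun m n hmn => Set.ofPred_subset_ofPred.2 fun x => (Nat.one_div_le_one_div hmn).trans_lt)
    (fun n => h _ Nat.one_div_pos_of_nat)

theorem forall_measure_setOf_lt_eq_zero_iff (hμ : NullContinuous μ)
    (hmono : ∀ ⦃A B : Set X⦄, MeasurableSet A → MeasurableSet B → A ⊆ B → μ A ≤ μ B)
    (hg : Measurable g) :
    (∀ c : ℝ, 0 < c → μ {x | c < g x} = 0) ↔ μ {x | 0 < g x} = 0 := by
  refine ⟨hμ.measure_setOf_pos_eq_zero hg, fun h c hc => nonpos_iff_eq_zero.mp ?_⟩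
  calc μ {x | c < g x}
      ≤ μ {x | 0 < g x} := hmono (measurableSet_lt measurable_const hg)
        (measurableSet_lt measurable_const hg) fun x hx => hc.trans hx
    _ = 0 := h

end NullContinuous

theorem SL_eq_zero_iff_general
    (μ : Set X → ℝ≥0∞)
    (hmono : ∀ ⦃A B : Set X⦄, MeasurableSet A → MeasurableSet B → A ⊆ B → μ A ≤ μ B)
    (p q : ℝ) (hp : 0 < p) (hq : 0 < q) (f : X → ℝ) (hf : Measurable f) :
    (SL μ p q f = 0 ↔ ∀ c : ℝ, 0 < c → μ {x | c < |f x|} = 0) ∧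
    ((∀ N : ℕ → Set X, (∀ n, MeasurableSet (N n)) → Monotone N →
        (∀ n, μ (N n) = 0) → μ (⋃ n, N n) = 0) →
      (SL μ p q f = 0 ↔ μ {x | 0 < |f x|} = 0)) := by
  have hlevel := SL_eq_zero_iff_forall_measure_lt_abs_eq_zero μ hp hq f
  refine ⟨hlevel, fun hμ => hlevel.trans ?_⟩
  exact NullContinuous.forall_measure_setOf_lt_eq_zero_iff hμ hmono hf.abs

/-- `(f)_{p,q} = 0` iff `μ({|f| > c}) = 0` for every `c > 0`; if `μ` is null-continuous
these are further equivalent to `μ({|f| > 0}) = 0`. -/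
theorem SL_eq_zero_iff
    (μ : Set X → ℝ≥0∞) (h0 : μ ∅ = 0)
    (hmono : ∀ ⦃A B : Set X⦄, MeasurableSet A → MeasurableSet B → A ⊆ B → μ A ≤ μ B)
    (p q : ℝ) (hp : 0 < p) (hq : 0 < q) (f : X → ℝ) (hf : Measurable f) :
    (SL μ p q f = 0 ↔ ∀ c : ℝ, 0 < c → μ {x | c < |f x|} = 0) ∧
    ((∀ N : ℕ → Set X, (∀ n, MeasurableSet (N n)) → Monotone N →
        (∀ n, μ (N n) = 0) → μ (⋃ n, N n) = 0) →
      (SL μ p q f = 0 ↔ μ {x | 0 < |f x|} = 0)) :=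
  SL_eq_zero_iff_general μ hmono p q hp hq f hf
end

section
/- Let μ be a nonadditive measure and 0 < p,q < ∞. For any sequence of measurable functions f_n and measurable f, the Sugeno-Lorentz prenorms (f_n - f)_{p,q} → 0 if and only if f_n converges to f in μ-measure, i.e., μ({|f_n - f| > ε}) → 0 for every ε > 0. -/
open scoped NNReal ENNReal
open ENNReal Filter Topology

variable {X : Type*} [MeasurableSpace X]

/-- Auxiliary: the superlevel set of `ofReal (r * |h x| ^ q)` at level `ofReal (r * c ^ q)`
equals the superlevel set of `|h|` at `c`, for `c > 0`. -/
lemma superlevel_eq {r q : ℝ} (hr : 0 < r) (hq : 0 < q) (h : X → ℝ) {c : ℝ} (hc : 0 < c) :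
    {x | ENNReal.ofReal (r * c ^ q) < ENNReal.ofReal (r * |h x| ^ q)} = {x | c < |h x|} := by
  ext x
  simp only [Set.mem_setOf_eq]
  rw [ENNReal.ofReal_lt_ofReal_iff_of_nonneg
    (mul_nonneg hr.le (Real.rpow_nonneg hc.le q)), mul_lt_mul_iff_right₀ hr]
  exact Real.rpow_lt_rpow_iff hc.le (abs_nonneg _) hq

lemma tendsto_rpow_zero_iff {α : Type*} {l : Filter α} (a : α → ℝ≥0∞) {s : ℝ} (hs : 0 < s) :
    Tendsto (fun n => a n ^ s) l (𝓝 0) ↔ Tendsto a l (𝓝 0) := by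
  rw [ENNReal.tendsto_nhds_zero, ENNReal.tendsto_nhds_zero]
  constructor
  · intro hyp ε hε
    filter_upwards [hyp (ε ^ s) (ENNReal.rpow_pos_of_nonneg hε hs.le)] with n hn
    exact (ENNReal.rpow_le_rpow_iff hs).mp hn
  · intro hyp ε hε
    filter_upwards [hyp (ε ^ (1 / s)) (ENNReal.rpow_pos_of_nonneg hε (by positivity))] with n hn
    calc a n ^ s ≤ (ε ^ (1 / s)) ^ s := ENNReal.rpow_le_rpow hn hs.le
    _ = ε := by rw [← ENNReal.rpow_mul, one_div, inv_mul_cancel₀ hs.ne', ENNReal.rpow_one]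

/-- `(f_n - f)_{p,q} → 0` iff `f_n → f` in `μ`-measure. -/
theorem SL_tendsto_zero_iff_convergence_in_measure
    (μ : Set X → ℝ≥0∞) (h0 : μ ∅ = 0)
    (hmono : ∀ ⦃A B : Set X⦄, MeasurableSet A → MeasurableSet B → A ⊆ B → μ A ≤ μ B)
    (p q : ℝ) (hp : 0 < p) (hq : 0 < q)
    (f : ℕ → X → ℝ) (hf : ∀ n, Measurable (f n)) (g : X → ℝ) (hg : Measurable g) :
    Tendsto (fun n => SL μ p q (f n - g)) atTop (𝓝 0) ↔
      ∀ ε : ℝ, 0 < ε → Tendsto (fun n => μ {x | ε < |f n x - g x|}) atTop (𝓝 0) := by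
  set r := p / q with hrdef
  have hr : 0 < r := div_pos hp hq
  set h : ℕ → X → ℝ := fun n x => f n x - g x with hh
  have hmeas : ∀ n (c : ℝ), MeasurableSet {x | c < |h n x|} := fun n c =>
    measurableSet_lt measurable_const ((hf n).sub hg).abs
  have hmeasG : ∀ n (t : ℝ≥0∞),
      MeasurableSet {x | t < ENNReal.ofReal (r * |h n x| ^ q)} := fun n t =>
    measurableSet_lt measurable_const
      ((((Real.continuous_rpow_const hq.le).measurable.comp
        ((hf n).sub hg).abs).const_mul r).ennreal_ofReal)
  have hSL : ∀ n, SL μ p q (f n - g)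
      = (Su (fun A => μ A ^ r) (fun x => ENNReal.ofReal (r * |h n x| ^ q))) ^ (1 / q) := by
    intro n; rfl
  simp only [hSL]
  rw [tendsto_rpow_zero_iff _ (by positivity : (0:ℝ) < 1 / q)]
  rw [ENNReal.tendsto_nhds_zero]
  constructor
  · -- Su → 0 implies convergence in measure
    intro hyp ε hε
    rw [ENNReal.tendsto_nhds_zero]
    intro c hc
    set t₀ : ℝ≥0 := (r * ε ^ q).toNNReal with ht₀def
    have ht₀pos : (0:ℝ≥0∞) < (t₀ : ℝ≥0∞) := by
      simp only [ht₀def, ENNReal.coe_pos, Real.toNNReal_pos]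
      positivity
    have hδpos : (0:ℝ≥0∞) < min ((t₀ : ℝ≥0∞) / 2) (c ^ r) :=
      lt_min (ENNReal.div_pos ht₀pos.ne' (by norm_num))
        (ENNReal.rpow_pos_of_nonneg hc hr.le)
    filter_upwards [hyp _ hδpos] with n hn
    have hcoe : ((t₀ : ℝ≥0) : ℝ≥0∞) = ENNReal.ofReal (r * ε ^ q) := rfl
    have hle : min ((t₀ : ℝ≥0∞)) (μ {x | (t₀ : ℝ≥0∞) < ENNReal.ofReal (r * |h n x| ^ q)} ^ r)
        ≤ min ((t₀ : ℝ≥0∞) / 2) (c ^ r) :=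
      le_trans (le_iSup (fun t : ℝ≥0 =>
        min ((t : ℝ≥0∞)) (μ {x | (t : ℝ≥0∞) < ENNReal.ofReal (r * |h n x| ^ q)} ^ r)) t₀) hn
    have hset : {x | (t₀ : ℝ≥0∞) < ENNReal.ofReal (r * |h n x| ^ q)} = {x | ε < |h n x|} := by
      rw [hcoe]; exact superlevel_eq hr hq (h n) hε
    rw [hset] at hle
    set B := μ {x | ε < |h n x|} ^ r with hB
    have hhalf : (t₀ : ℝ≥0∞) / 2 < (t₀ : ℝ≥0∞) :=
      ENNReal.half_lt_self ht₀pos.ne' ENNReal.coe_ne_top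
    have h1 : min ((t₀ : ℝ≥0∞)) B < (t₀ : ℝ≥0∞) :=
      lt_of_le_of_lt (hle.trans (min_le_left _ _)) hhalf
    have hBle : B ≤ c ^ r := by
      rcases le_total ((t₀ : ℝ≥0∞)) B with hab | hab
      · exfalso; rw [min_eq_left hab] at h1; exact lt_irrefl _ h1
      · rw [min_eq_right hab] at hle; exact hle.trans (min_le_right _ _)
    exact (ENNReal.rpow_le_rpow_iff hr).mp hBle
  · -- convergence in measure implies Su → 0
    intro hyp δ hδ
    by_cases hδtop : δ = ⊤
    · filter_upwards with n; simp [hδtop]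
    set δ' : ℝ≥0∞ := min δ 1 with hδ'def
    have hδ'pos : 0 < δ' := lt_min hδ (by norm_num)
    have hδ'top : δ' ≠ ⊤ := by simp [hδ'def, hδtop]
    set t₁ : ℝ≥0 := δ'.toNNReal with ht₁def
    have ht₁ : ((t₁ : ℝ≥0) : ℝ≥0∞) = δ' := ENNReal.coe_toNNReal hδ'top
    have ht₁pos : (0:ℝ) < (t₁ : ℝ) := by
      have := hδ'pos
      rw [← ht₁] at this
      exact_mod_cast this
    set ε : ℝ := ((t₁ : ℝ) / r) ^ (1 / q) with hεdef
    have hεpos : 0 < ε := Real.rpow_pos_of_pos (by positivity) _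
    have hεq : r * ε ^ q = (t₁ : ℝ) := by
      rw [hεdef, ← Real.rpow_mul (by positivity), one_div, inv_mul_cancel₀ hq.ne',
        Real.rpow_one, mul_comm, div_mul_cancel₀ _ hr.ne']
    have hconv := ENNReal.tendsto_nhds_zero.mp (hyp ε hεpos)
    have hd : (0:ℝ≥0∞) < δ' ^ (1 / r) := ENNReal.rpow_pos_of_nonneg hδ'pos (by positivity)
    filter_upwards [hconv _ hd] with n hn
    have hmain : μ {x | ε < |h n x|} ^ r ≤ δ' := by
      calc μ {x | ε < |h n x|} ^ r ≤ (δ' ^ (1 / r)) ^ r := ENNReal.rpow_le_rpow hn hr.le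
      _ = δ' := by rw [← ENNReal.rpow_mul, one_div, inv_mul_cancel₀ hr.ne', ENNReal.rpow_one]
    refine le_trans (iSup_le fun t => ?_) (min_le_left δ 1)
    rcases le_total ((t : ℝ≥0∞)) δ' with hle | hle
    · exact le_trans (min_le_left _ _) hle
    · refine le_trans (min_le_right _ _) ?_
      have hset : {x | ((t₁ : ℝ≥0) : ℝ≥0∞) < ENNReal.ofReal (r * |h n x| ^ q)}
          = {x | ε < |h n x|} := by
        have hc : ((t₁ : ℝ≥0) : ℝ≥0∞) = ENNReal.ofReal (r * ε ^ q) := by rw [hεq, ENNReal.ofReal_coe_nnreal]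
        rw [hc]
        exact superlevel_eq hr hq (h n) hεpos
      have hsub : {x | (t : ℝ≥0∞) < ENNReal.ofReal (r * |h n x| ^ q)}
          ⊆ {x | ε < |h n x|} := by
        intro x hx
        have hx' : ((t₁ : ℝ≥0) : ℝ≥0∞) < ENNReal.ofReal (r * |h n x| ^ q) :=
          lt_of_le_of_lt (ht₁ ▸ hle) hx
        exact hset ▸ hx'
      calc μ {x | (t : ℝ≥0∞) < ENNReal.ofReal (r * |h n x| ^ q)} ^ r
          ≤ μ {x | ε < |h n x|} ^ r :=
            ENNReal.rpow_le_rpow (hmono (hmeasG n t) (hmeas n ε) hsub) hr.le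
        _ ≤ δ' := hmain
end

section
/- A nonadditive measure μ is autocontinuous from below if and only if the Fatou convergence-in-measure lemma holds for the Sugeno integral: for any sequence of measurable f_n ≥ 0 and measurable f ≥ 0 with f_n → f in μ-measure, one has Su(μ,f) ≤ liminf_n Su(μ,f_n). -/
/-!
(⇒) For `r < t`, every point with `g > t` and `|fₙ - g| ≤ t - r` has `fₙ > r`. Removing the sets
`{|fₙ - g| > t - r}`, whose measure tends to `0`, from `{g > t}` eventually leaves measure `> r`
by autocontinuity, so `r ≤ Su(μ, fₙ)` eventually.
(⇐) Fatou's lemma for `fₙ = c · 1_{A \ Bₙ} → c · 1_A` gives `min (r, μ A) ≤ liminf μ (A \ Bₙ)`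
for every `r < c`, and `μ (A \ Bₙ) ≤ μ A` by monotonicity.
-/

open scoped NNReal ENNReal
open ENNReal Filter Topology

variable {X : Type*} [MeasurableSpace X]

open Set

def AutocontinuousFromBelow (μ : Set X → ℝ≥0∞) : Prop :=
  ∀ (A : Set X) (B : ℕ → Set X), MeasurableSet A → (∀ n, MeasurableSet (B n)) →
    Tendsto (fun n => μ (B n)) atTop (𝓝 0) → Tendsto (fun n => μ (A \ B n)) atTop (𝓝 (μ A))

def TendstoInNonadditiveMeasure (μ : Set X → ℝ≥0∞) (f : ℕ → X → ℝ) (g : X → ℝ) : Prop :=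
  ∀ ε : ℝ, 0 < ε → Tendsto (fun n => μ {x | ε < |f n x - g x|}) atTop (𝓝 0)

def SugenoFatouProperty (μ : Set X → ℝ≥0∞) : Prop :=
  ∀ (f : ℕ → X → ℝ) (g : X → ℝ), (∀ n, Measurable (f n)) → Measurable g →
    (∀ n x, 0 ≤ f n x) → (∀ x, 0 ≤ g x) → TendstoInNonadditiveMeasure μ f g →
    Su μ (fun x => ENNReal.ofReal (g x)) ≤
      liminf (fun n => Su μ (fun x => ENNReal.ofReal (f n x))) atTop

section

omit [MeasurableSpace X]

variable (μ : Set X → ℝ≥0∞)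

lemma Su_ofReal (h : X → ℝ) :
    Su μ (fun x => ENNReal.ofReal (h x)) = ⨆ t : ℝ≥0, min (t : ℝ≥0∞) (μ {x | (t : ℝ) < h x}) := by
  simp only [Su, coe_lt_ofReal]

lemma min_le_Su_ofReal (h : X → ℝ) (t : ℝ≥0) :
    min (t : ℝ≥0∞) (μ {x | (t : ℝ) < h x}) ≤ Su μ (fun x => ENNReal.ofReal (h x)) :=
  Su_ofReal μ h ▸ le_iSup (fun t : ℝ≥0 => min (t : ℝ≥0∞) (μ {x | (t : ℝ) < h x})) t

lemma min_le_Su_ofReal_indicator (S : Set X) {r : ℝ≥0} {c : ℝ} (hrc : r < c) :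
    min (r : ℝ≥0∞) (μ S) ≤ Su μ (fun x => ENNReal.ofReal (S.indicator (fun _ => c) x)) := by
  convert min_le_Su_ofReal μ _ r using 3
  ext x
  by_cases hx : x ∈ S <;> simp [hx, hrc, not_lt.mpr r.coe_nonneg]

lemma diff_setOf_lt_abs_sub_subset {f g : X → ℝ} {r t : ℝ} :
    {x | t < g x} \ {x | t - r < |f x - g x|} ⊆ {x | r < f x} := by
  rintro x ⟨hgx, hfgx⟩
  simp only [mem_ofPred_eq, not_lt] at *
  linarith [(abs_le.mp hfgx).1]

lemma setOf_lt_abs_indicator_diff_sub_indicator_subset {A B : Set X} {c ε : ℝ} (hε : 0 < ε) :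
    {x | ε < |(A \ B).indicator (fun _ => c) x - A.indicator (fun _ => c) x|} ⊆ B := by
  intro x hx
  by_contra hxB
  by_cases hxA : x ∈ A
  · simp [hxA, hxB, hε.not_gt] at hx
  · simp [hxA, hε.not_gt] at hx

end

section

variable {μ : Set X → ℝ≥0∞}
  (hmono : ∀ ⦃A B : Set X⦄, MeasurableSet A → MeasurableSet B → A ⊆ B → μ A ≤ μ B)
include hmono

lemma Su_le_liminf_Su_of_tendstoInNonadditiveMeasure (hac : AutocontinuousFromBelow μ)
    {f : ℕ → X → ℝ} {g : X → ℝ} (hf : ∀ n, Measurable (f n)) (hg : Measurable g)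
    (hfg : TendstoInNonadditiveMeasure μ f g) :
    Su μ (fun x => ENNReal.ofReal (g x)) ≤
      liminf (fun n => Su μ (fun x => ENNReal.ofReal (f n x))) atTop := by
  rw [Su_ofReal]
  refine iSup_le fun t => ENNReal.le_of_forall_nnreal_lt fun r hr => ?_
  obtain ⟨hrt, hrA⟩ := lt_min_iff.mp hr
  have hrt : (r : ℝ) < t := by exact_mod_cast hrt
  set A := {x | (t : ℝ) < g x}
  set B := fun n => {x | (t : ℝ) - r < |f n x - g x|}
  have hA : MeasurableSet A := measurableSet_lt measurable_const hg
  have hB n : MeasurableSet (B n) := measurableSet_lt measurable_const ((hf n).sub hg).abs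
  have hlim := hac A B hA hB (hfg _ (sub_pos.mpr hrt))
  refine le_liminf_of_le (by isBoundedDefault) ?_
  filter_upwards [hlim.eventually (lt_mem_nhds hrA)] with n hn
  calc (r : ℝ≥0∞) = min (r : ℝ≥0∞) (μ (A \ B n)) := (min_eq_left hn.le).symm
    _ ≤ min (r : ℝ≥0∞) (μ {x | (r : ℝ) < f n x}) :=
      min_le_min_left _ <| hmono (hA.diff (hB n)) (measurableSet_lt measurable_const (hf n))
        diff_setOf_lt_abs_sub_subset
    _ ≤ _ := min_le_Su_ofReal μ (f n) r

lemma Su_ofReal_indicator_le {S : Set X} (hS : MeasurableSet S) (c : ℝ) :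
    Su μ (fun x => ENNReal.ofReal (S.indicator (fun _ => c) x)) ≤ μ S := by
  rw [Su_ofReal]
  refine iSup_le fun t => (min_le_right _ _).trans (hmono ?_ hS fun x hx => ?_)
  · exact measurableSet_lt measurable_const (measurable_const.indicator hS)
  · by_contra hxS
    simp [hxS, not_lt.mpr t.coe_nonneg] at hx

lemma sugenoFatouProperty_of_autocontinuousFromBelow (hac : AutocontinuousFromBelow μ) :
    SugenoFatouProperty μ :=
  fun _ _ hf hg _ _ hfg => Su_le_liminf_Su_of_tendstoInNonadditiveMeasure hmono hac hf hg hfg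

lemma autocontinuousFromBelow_of_sugenoFatouProperty (hF : SugenoFatouProperty μ) :
    AutocontinuousFromBelow μ := by
  intro A B hA hB hμB
  refine tendsto_of_le_liminf_of_limsup_le ?_ ?_
  · refine ENNReal.le_of_forall_nnreal_lt fun r hr => ?_
    let c : ℝ := r + 1
    let f n := (A \ B n).indicator fun _ => c
    let g := A.indicator fun _ => c
    have hc : 0 ≤ c := by positivity
    have hf n : Measurable (f n) := measurable_const.indicator (hA.diff (hB n))
    have hg : Measurable g := measurable_const.indicator hA
    have hfg : TendstoInNonadditiveMeasure μ f g := fun ε hε =>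
      tendsto_of_tendsto_of_tendsto_of_le_of_le tendsto_const_nhds hμB (fun _ => zero_le)
        fun n => hmono (measurableSet_lt measurable_const ((hf n).sub hg).abs) (hB n)
          (setOf_lt_abs_indicator_diff_sub_indicator_subset hε)
    calc (r : ℝ≥0∞) = min (r : ℝ≥0∞) (μ A) := (min_eq_left hr.le).symm
      _ ≤ Su μ (fun x => ENNReal.ofReal (g x)) := min_le_Su_ofReal_indicator μ A (lt_add_one _)
      _ ≤ liminf (fun n => Su μ (fun x => ENNReal.ofReal (f n x))) atTop :=
        hF f g hf hg (fun _ => indicator_nonneg fun _ _ => hc) (indicator_nonneg fun _ _ => hc) hfg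
      _ ≤ liminf (fun n => μ (A \ B n)) atTop :=
        liminf_le_liminf <| .of_forall fun n => Su_ofReal_indicator_le hmono (hA.diff (hB n)) c
  · exact limsup_le_of_le (by isBoundedDefault)
      (.of_forall fun n => hmono (hA.diff (hB n)) hA sdiff_subset)

end

theorem autocontinuous_from_below_iff_fatou_general
    (μ : Set X → ℝ≥0∞)
    (hmono : ∀ ⦃A B : Set X⦄, MeasurableSet A → MeasurableSet B → A ⊆ B → μ A ≤ μ B) :
    (∀ (A : Set X) (B : ℕ → Set X), MeasurableSet A → (∀ n, MeasurableSet (B n)) →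
        Tendsto (fun n => μ (B n)) atTop (𝓝 0) →
        Tendsto (fun n => μ (A \ B n)) atTop (𝓝 (μ A))) ↔
      (∀ (f : ℕ → X → ℝ) (g : X → ℝ), (∀ n, Measurable (f n)) → Measurable g →
        (∀ n x, 0 ≤ f n x) → (∀ x, 0 ≤ g x) →
        (∀ ε : ℝ, 0 < ε → Tendsto (fun n => μ {x | ε < |f n x - g x|}) atTop (𝓝 0)) →
        Su μ (fun x => ENNReal.ofReal (g x)) ≤
          Filter.liminf (fun n => Su μ (fun x => ENNReal.ofReal (f n x))) atTop) :=
  ⟨sugenoFatouProperty_of_autocontinuousFromBelow hmono,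
    autocontinuousFromBelow_of_sugenoFatouProperty hmono⟩

/-- `μ` is autocontinuous from below iff the Fatou convergence-in-measure lemma holds
for the Sugeno integral. -/
theorem autocontinuous_from_below_iff_fatou
    (μ : Set X → ℝ≥0∞) (h0 : μ ∅ = 0)
    (hmono : ∀ ⦃A B : Set X⦄, MeasurableSet A → MeasurableSet B → A ⊆ B → μ A ≤ μ B) :
    (∀ (A : Set X) (B : ℕ → Set X), MeasurableSet A → (∀ n, MeasurableSet (B n)) →
        Tendsto (fun n => μ (B n)) atTop (𝓝 0) →
        Tendsto (fun n => μ (A \ B n)) atTop (𝓝 (μ A))) ↔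
      (∀ (f : ℕ → X → ℝ) (g : X → ℝ), (∀ n, Measurable (f n)) → Measurable g →
        (∀ n x, 0 ≤ f n x) → (∀ x, 0 ≤ g x) →
        (∀ ε : ℝ, 0 < ε → Tendsto (fun n => μ {x | ε < |f n x - g x|}) atTop (𝓝 0)) →
        Su μ (fun x => ENNReal.ofReal (g x)) ≤
          Filter.liminf (fun n => Su μ (fun x => ENNReal.ofReal (f n x))) atTop) :=
  autocontinuous_from_below_iff_fatou_general μ hmono
end

section
/- A nonadditive measure μ is autocontinuous from above if and only if the reverse Fatou convergence-in-measure lemma holds for the Sugeno integral: for any sequence of measurable f_n ≥ 0 and measurable f ≥ 0 with f_n → f in μ-measure, one has limsup_n Su(μ,f_n) ≤ Su(μ,f). -/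
/-!
Autocontinuity gives reverse Fatou: if `Su(μ, g) = s < ∞` and `δ > 0`, put
`A = {g > s + δ/2}`, so that `μ A ≤ s` (as `min (s + δ/2) (μ A) ≤ s`), and
`D n = {|f n - g| > δ/2}`, so that `μ (D n) → 0`. Every level set `{f n > t}` with `t ≥ s + δ`
lies in `A ∪ D n`, whose measure tends to `μ A ≤ s`; hence eventually `Su(μ, f n) ≤ s + δ`.

Conversely, for `μ A < c`, the indicators `c·1_{A ∪ B n}` converge in measure to `c·1_A` when
`μ (B n) → 0`, and their Sugeno integrals are `min c (μ (A ∪ B n))` and `μ A`, so reverse Fatou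
forces `μ (A ∪ B n) < c` eventually.
-/

open scoped NNReal ENNReal
open ENNReal Filter Topology

variable {X : Type*} [MeasurableSpace X]

def AutocontinuousFromAbove (μ : Set X → ℝ≥0∞) : Prop :=
  ∀ (A : Set X) (B : ℕ → Set X), MeasurableSet A → (∀ n, MeasurableSet (B n)) →
    Tendsto (fun n => μ (B n)) atTop (𝓝 0) → Tendsto (fun n => μ (A ∪ B n)) atTop (𝓝 (μ A))

def ConvergesInMeasure (μ : Set X → ℝ≥0∞) (f : ℕ → X → ℝ) (g : X → ℝ) : Prop :=
  ∀ ε : ℝ, 0 < ε → Tendsto (fun n => μ {x | ε < |f n x - g x|}) atTop (𝓝 0)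

def SugenoReverseFatou (μ : Set X → ℝ≥0∞) : Prop :=
  ∀ (f : ℕ → X → ℝ) (g : X → ℝ), (∀ n, Measurable (f n)) → Measurable g →
    (∀ n x, 0 ≤ f n x) → (∀ x, 0 ≤ g x) → ConvergesInMeasure μ f g →
    limsup (fun n => Su μ (fun x => ENNReal.ofReal (f n x))) atTop ≤
      Su μ (fun x => ENNReal.ofReal (g x))

section Sugeno

variable {α : Type*} (μ : Set α → ℝ≥0∞)

lemma Su_le_of_forall_lt {g : α → ℝ≥0∞} {a : ℝ≥0∞}
    (h : ∀ t : ℝ≥0, a < t → μ {x | (t : ℝ≥0∞) < g x} ≤ a) : Su μ g ≤ a := by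
  refine iSup_le fun t => ?_
  rcases le_or_gt (t : ℝ≥0∞) a with hta | hat
  · exact (min_le_left _ _).trans hta
  · exact (min_le_right _ _).trans (h t hat)

lemma measure_setOf_lt_le_Su {g : α → ℝ≥0∞} {t : ℝ≥0} (ht : Su μ g < t) :
    μ {x | (t : ℝ≥0∞) < g x} ≤ Su μ g := by
  have hle : min (t : ℝ≥0∞) (μ {x | (t : ℝ≥0∞) < g x}) ≤ Su μ g :=
    le_iSup (fun t : ℝ≥0 => min (t : ℝ≥0∞) (μ {x | (t : ℝ≥0∞) < g x})) t
  have hlt : μ {x | (t : ℝ≥0∞) < g x} < t :=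
    (min_lt_iff.1 (hle.trans_lt ht)).resolve_left (lt_irrefl _)
  rwa [min_eq_right hlt.le] at hle

lemma Su_ofReal_indicator_const (h0 : μ ∅ = 0) (S : Set α) (c : ℝ≥0) :
    Su μ (fun x => ENNReal.ofReal (S.indicator (fun _ => (c : ℝ)) x)) = min (c : ℝ≥0∞) (μ S) := by
  have hlevel : ∀ t : ℝ≥0,
      {x | (t : ℝ≥0∞) < ENNReal.ofReal (S.indicator (fun _ => (c : ℝ)) x)} =
        if t < c then S else ∅ := by
    intro t
    ext x
    by_cases hx : x ∈ S <;> by_cases htc : t < c <;> simp [hx, htc]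
  refine le_antisymm (iSup_le fun t => ?_) (le_of_forall_lt fun a ha => ?_)
  · rw [hlevel]
    split_ifs with htc
    · exact min_le_min_right _ (coe_le_coe.2 htc.le)
    · simp [h0]
  · obtain ⟨hac, haS⟩ := lt_min_iff.1 ha
    obtain ⟨r, har, hrc⟩ := ENNReal.lt_iff_exists_nnreal_btwn.1 hac
    refine (lt_min har haS).trans_le (le_iSup_of_le r ?_)
    rw [hlevel, if_pos (coe_lt_coe.1 hrc)]

end Sugeno

section LevelSets

variable {α : Type*}

lemma setOf_coe_lt_ofReal_subset_union {f g : α → ℝ} {r η t : ℝ≥0} (h : r + η ≤ t) :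
    {x | (t : ℝ≥0∞) < ENNReal.ofReal (f x)} ⊆
      {x | (r : ℝ≥0∞) < ENNReal.ofReal (g x)} ∪ {x | (η : ℝ) < |f x - g x|} := by
  intro x hx
  simp only [Set.mem_ofPred_eq, coe_lt_ofReal, Set.mem_union] at hx ⊢
  by_contra! hcon
  have hrηt : (r : ℝ) + η ≤ t := by exact_mod_cast h
  linarith [(abs_le.1 hcon.2).2]

lemma setOf_lt_abs_indicator_union_sub_subset (v : α → ℝ) {A B : Set α} {ε : ℝ} (hε : 0 ≤ ε) :
    {x | ε < |(A ∪ B).indicator v x - A.indicator v x|} ⊆ B := by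
  intro x hx
  by_contra hxB
  have hAB : (A ∪ B).indicator v x = A.indicator v x := by
    by_cases hxA : x ∈ A <;> simp [hxA, hxB]
  simp only [Set.mem_ofPred_eq, hAB, sub_self, abs_zero] at hx
  linarith

end LevelSets

section Autocontinuity

variable {μ : Set X → ℝ≥0∞}

lemma convergesInMeasure_indicator_union
    (hmono : ∀ ⦃A B : Set X⦄, MeasurableSet A → MeasurableSet B → A ⊆ B → μ A ≤ μ B)
    {A : Set X} {B : ℕ → Set X} (hA : MeasurableSet A)
    (hB : ∀ n, MeasurableSet (B n)) (hμB : Tendsto (fun n => μ (B n)) atTop (𝓝 0))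
    {v : X → ℝ} (hv : Measurable v) :
    ConvergesInMeasure μ (fun n => (A ∪ B n).indicator v) (A.indicator v) := by
  intro ε hε
  refine tendsto_of_tendsto_of_tendsto_of_le_of_le tendsto_const_nhds hμB (fun _ => zero_le)
    fun n => hmono ?_ (hB n) (setOf_lt_abs_indicator_union_sub_subset v hε.le)
  exact measurableSet_lt measurable_const
    ((hv.indicator (hA.union (hB n))).sub (hv.indicator hA)).abs

lemma limsup_Su_le_of_convergesInMeasure
    (hmono : ∀ ⦃A B : Set X⦄, MeasurableSet A → MeasurableSet B → A ⊆ B → μ A ≤ μ B)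
    (hμ : AutocontinuousFromAbove μ)
    {f : ℕ → X → ℝ} {g : X → ℝ} (hf : ∀ n, Measurable (f n)) (hg : Measurable g)
    (hfg : ConvergesInMeasure μ f g) :
    limsup (fun n => Su μ (fun x => ENNReal.ofReal (f n x))) atTop ≤
      Su μ (fun x => ENNReal.ofReal (g x)) := by
  refine ENNReal.le_of_forall_pos_le_add fun δ hδ hfin => ?_
  obtain ⟨s, hs⟩ : ∃ s : ℝ≥0, Su μ (fun x => ENNReal.ofReal (g x)) = s :=
    ⟨_, (coe_toNNReal hfin.ne).symm⟩
  set A := {x | ((s + δ / 2 : ℝ≥0) : ℝ≥0∞) < ENNReal.ofReal (g x)}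
  set D : ℕ → Set X := fun n => {x | ((δ / 2 : ℝ≥0) : ℝ) < |f n x - g x|}
  have hA : MeasurableSet A := measurableSet_lt measurable_const hg.ennreal_ofReal
  have hD : ∀ n, MeasurableSet (D n) := fun n =>
    measurableSet_lt measurable_const ((hf n).sub hg).abs
  have hμA : μ A < s + δ := by
    have hSu : Su μ (fun x => ENNReal.ofReal (g x)) < (s + δ / 2 : ℝ≥0) := by
      rw [hs]
      exact_mod_cast lt_add_of_pos_right s (half_pos hδ)
    have hle := measure_setOf_lt_le_Su μ hSu
    rw [hs] at hle
    exact hle.trans_lt (by exact_mod_cast lt_add_of_pos_right s hδ)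
  have hev : ∀ᶠ n in atTop, μ (A ∪ D n) < s + δ :=
    (hμ A D hA hD (hfg _ (by positivity))).eventually_lt_const hμA
  rw [hs]
  refine limsup_le_of_le (by isBoundedDefault)
    (hev.mono fun n hn => Su_le_of_forall_lt μ fun t ht => ?_)
  refine (hmono (measurableSet_lt measurable_const (hf n).ennreal_ofReal) (hA.union (hD n))
    (setOf_coe_lt_ofReal_subset_union ?_)).trans hn.le
  rw [add_assoc, add_halves]
  exact_mod_cast ht.le

lemma autocontinuousFromAbove_of_sugenoReverseFatou
    (hmono : ∀ ⦃A B : Set X⦄, MeasurableSet A → MeasurableSet B → A ⊆ B → μ A ≤ μ B)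
    (H : SugenoReverseFatou μ) :
    AutocontinuousFromAbove μ := by
  intro A B hA hB hμB
  have h0 : μ ∅ = 0 :=
    le_zero_iff.1 (ge_of_tendsto' hμB fun n => hmono .empty (hB n) (Set.empty_subset _))
  refine tendsto_order.2 ⟨fun l hl => .of_forall fun n =>
    hl.trans_le (hmono hA (hA.union (hB n)) Set.subset_union_left), fun u hu => ?_⟩
  obtain ⟨c, hAc, hcu⟩ := ENNReal.lt_iff_exists_nnreal_btwn.1 hu
  have hc : Measurable fun _ : X => (c : ℝ) := measurable_const
  have hc0 : ∀ S : Set X, ∀ x, 0 ≤ S.indicator (fun _ => (c : ℝ)) x := fun _ _ =>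
    Set.indicator_nonneg (fun _ _ => c.coe_nonneg) _
  have key := H _ _ (fun n => hc.indicator (hA.union (hB n))) (hc.indicator hA)
    (fun _ => hc0 _) (hc0 A) (convergesInMeasure_indicator_union hmono hA hB hμB hc)
  simp only [Su_ofReal_indicator_const μ h0, min_eq_right hAc.le] at key
  filter_upwards [eventually_lt_of_limsup_lt (key.trans_lt hAc)] with n hn
  exact ((min_lt_iff.1 hn).resolve_left (lt_irrefl _)).trans hcu

end Autocontinuity

theorem autocontinuous_from_above_iff_reverse_fatou_general
    (μ : Set X → ℝ≥0∞)
    (hmono : ∀ ⦃A B : Set X⦄, MeasurableSet A → MeasurableSet B → A ⊆ B → μ A ≤ μ B) :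
    (∀ (A : Set X) (B : ℕ → Set X), MeasurableSet A → (∀ n, MeasurableSet (B n)) →
        Tendsto (fun n => μ (B n)) atTop (𝓝 0) →
        Tendsto (fun n => μ (A ∪ B n)) atTop (𝓝 (μ A))) ↔
      (∀ (f : ℕ → X → ℝ) (g : X → ℝ), (∀ n, Measurable (f n)) → Measurable g →
        (∀ n x, 0 ≤ f n x) → (∀ x, 0 ≤ g x) →
        (∀ ε : ℝ, 0 < ε → Tendsto (fun n => μ {x | ε < |f n x - g x|}) atTop (𝓝 0)) →
        Filter.limsup (fun n => Su μ (fun x => ENNReal.ofReal (f n x))) atTop ≤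
          Su μ (fun x => ENNReal.ofReal (g x))) :=
  ⟨fun hμ _ _ hf hg _ _ hfg => limsup_Su_le_of_convergesInMeasure hmono hμ hf hg hfg,
    autocontinuousFromAbove_of_sugenoReverseFatou hmono⟩

/-- `μ` is autocontinuous from above iff the reverse Fatou convergence-in-measure lemma
holds for the Sugeno integral. -/
theorem autocontinuous_from_above_iff_reverse_fatou
    (μ : Set X → ℝ≥0∞) (h0 : μ ∅ = 0)
    (hmono : ∀ ⦃A B : Set X⦄, MeasurableSet A → MeasurableSet B → A ⊆ B → μ A ≤ μ B) :
    (∀ (A : Set X) (B : ℕ → Set X), MeasurableSet A → (∀ n, MeasurableSet (B n)) →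
        Tendsto (fun n => μ (B n)) atTop (𝓝 0) →
        Tendsto (fun n => μ (A ∪ B n)) atTop (𝓝 (μ A))) ↔
      (∀ (f : ℕ → X → ℝ) (g : X → ℝ), (∀ n, Measurable (f n)) → Measurable g →
        (∀ n x, 0 ≤ f n x) → (∀ x, 0 ≤ g x) →
        (∀ ε : ℝ, 0 < ε → Tendsto (fun n => μ {x | ε < |f n x - g x|}) atTop (𝓝 0)) →
        Filter.limsup (fun n => Su μ (fun x => ENNReal.ofReal (f n x))) atTop ≤
          Su μ (fun x => ENNReal.ofReal (g x))) :=
  autocontinuous_from_above_iff_reverse_fatou_general μ hmono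
end

section
/- Let μ be the nonadditive measure on (ℕ, 2^ℕ) defined by μ(∅) = 0 and μ(A) = |A| · Σ_{i∈A} 2^{-i} for nonempty finite A (and ∞ for infinite A). Let M₀ := (q/p)^{1/q}, f := M₀·χ_{{1}} and f_n := M₀·χ_{{1, n+1}}. Then (f_n - f)_{p,q} → 0, (f_n)_{p,q} = 1 for every n, and (f)_{p,q} < 1. Hence the sphere {g : (g)_{p,q} < 1} is not open in the Sugeno-Lorentz topology. -/
open scoped NNReal ENNReal
open ENNReal Filter Topology

variable {X : Type*} [MeasurableSpace X]

attribute [local instance] Classical.propDecidable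

/-- The nonadditive measure on `(ℕ, 2^ℕ)` with `μ(∅)=0` and
`μ(A) = |A| · Σ_{i∈A} 2^{-i}` (with `|A| = ∞` for infinite `A`). -/
noncomputable def mu18 : Set ℕ → ℝ≥0∞ := fun A =>
  (if A.Finite then (A.ncard : ℝ≥0∞) else ∞) * ∑' i : A, (2 : ℝ≥0∞)⁻¹ ^ (i : ℕ)

/-!
On an indicator of height `M₀` the Sugeno integral collapses:
`(M₀ χ_A)_{p,q} = min(1, μ(A)^{p/q})^{1/q}`. Since `μ {1, n+2} ≥ 2 · 2⁻¹ = 1`, `μ {1} = 1/2` and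
`μ {n+2} = 2^{-(n+2)} → 0`, the functions `f_n` lie on the unit sphere and converge to `f`, which
lies in the open unit ball, so no ball around `f` stays inside it.
-/

section SugenoLorentz

variable {α : Type*}

lemma Su_indicator_const {ν : Set α → ℝ≥0∞} (hν : ν ∅ = 0) (A : Set α) (c : ℝ≥0∞) :
    Su ν (A.indicator fun _ => c) = min c (ν A) := by
  have level_set {t : ℝ≥0∞} (ht : t < c) : {x | t < A.indicator (fun _ => c) x} = A := by
    ext x; by_cases hx : x ∈ A <;> simp [hx, ht]
  apply le_antisymm
  · refine iSup_le fun t => ?_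
    rcases lt_or_ge (t : ℝ≥0∞) c with ht | ht
    · rw [level_set ht]
      exact min_le_min ht.le le_rfl
    · have : {x | (t : ℝ≥0∞) < A.indicator (fun _ => c) x} = ∅ := by
        ext x; by_cases hx : x ∈ A <;> simp [hx, ht.not_gt]
      simp [this, hν]
  · refine le_of_forall_lt fun a ha => ?_
    obtain ⟨b, hab, hb⟩ := exists_between ha
    have hbc : b < c := hb.trans_le (min_le_left _ _)
    lift b to ℝ≥0 using (hbc.trans_le le_top).ne
    refine lt_of_lt_of_le ?_ (le_iSup _ b)
    rw [level_set hbc]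
    exact lt_min hab (hab.trans (hb.trans_le (min_le_right _ _)))

lemma SL_sub_comm (μ : Set α → ℝ≥0∞) (p q : ℝ) (f g : α → ℝ) :
    SL μ p q (f - g) = SL μ p q (g - f) := by
  simp only [SL, Pi.sub_apply, abs_sub_comm]

variable {μ : Set α → ℝ≥0∞} {p q : ℝ}

-- `(q / p) ^ (1 / q)` is exactly the height at which `(p / q) |f| ^ q` equals `1`.
lemma SL_indicator (hp : 0 < p) (hq : 0 < q) (hμ : μ ∅ = 0) (A : Set α) :
    SL μ p q (A.indicator fun _ => (q / p) ^ (1 / q)) = min 1 (μ A ^ (p / q)) ^ (1 / q) := by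
  have hM : ∀ x, ENNReal.ofReal ((p / q) * |A.indicator (fun _ => (q / p) ^ (1 / q)) x| ^ q)
      = A.indicator (fun _ => 1) x := by
    intro x
    by_cases hx : x ∈ A
    · rw [Set.indicator_of_mem hx, Set.indicator_of_mem hx,
        abs_of_nonneg (by positivity), ← Real.rpow_mul (by positivity),
        one_div_mul_cancel hq.ne', Real.rpow_one, div_mul_div_cancel₀' hp.ne' q,
        div_self hq.ne', ofReal_one]
    · simp [hx, Real.zero_rpow hq.ne']
  rw [SL, funext hM, Su_indicator_const (by simp [hμ, hp, hq]) A 1]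

lemma SL_indicator_eq_one (hp : 0 < p) (hq : 0 < q) (hμ : μ ∅ = 0) {A : Set α}
    (hA : 1 ≤ μ A) : SL μ p q (A.indicator fun _ => (q / p) ^ (1 / q)) = 1 := by
  rw [SL_indicator hp hq hμ, min_eq_left (one_le_rpow hA (by positivity)), one_rpow]

lemma SL_indicator_lt_one (hp : 0 < p) (hq : 0 < q) (hμ : μ ∅ = 0) {A : Set α}
    (hA : μ A < 1) : SL μ p q (A.indicator fun _ => (q / p) ^ (1 / q)) < 1 := by
  rw [SL_indicator hp hq hμ]
  exact rpow_lt_one ((min_le_right _ _).trans_lt (rpow_lt_one hA (by positivity)))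
    (by positivity)

lemma tendsto_SL_indicator_zero (hp : 0 < p) (hq : 0 < q) (hμ : μ ∅ = 0) {A : ℕ → Set α}
    (hA : Tendsto (fun n => μ (A n)) atTop (𝓝 0)) :
    Tendsto (fun n => SL μ p q ((A n).indicator fun _ => (q / p) ^ (1 / q))) atTop (𝓝 0) := by
  have hcont : Continuous fun a : ℝ≥0∞ => min 1 (a ^ (p / q)) ^ (1 / q) := by fun_prop
  have h := (hcont.tendsto 0).comp hA
  rw [zero_rpow_of_pos (by positivity), min_eq_right zero_le_one,
    zero_rpow_of_pos (by positivity)] at h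
  simpa only [SL_indicator hp hq hμ, Function.comp_def] using h

def IsSLOpen (μ : Set α → ℝ≥0∞) (p q : ℝ) (G : Set (α → ℝ)) : Prop :=
  ∀ f ∈ G, ∃ r : ℝ≥0∞, 0 < r ∧ ∀ g, SL μ p q (f - g) < r → g ∈ G

lemma not_isSLOpen_of_tendsto {G : Set (α → ℝ)} {f : α → ℝ} {F : ℕ → α → ℝ}
    (hF : Tendsto (fun n => SL μ p q (F n - f)) atTop (𝓝 0)) (hFG : ∀ n, F n ∉ G) (hf : f ∈ G) :
    ¬ IsSLOpen μ p q G := by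
  intro hG
  obtain ⟨r, hr, hball⟩ := hG f hf
  obtain ⟨n, hn⟩ := (hF.eventually (gt_mem_nhds hr)).exists
  exact hFG n (hball _ (SL_sub_comm μ p q f (F n) ▸ hn))

end SugenoLorentz

lemma mu18_empty : mu18 ∅ = 0 := by
  simp [mu18]

lemma mu18_singleton (a : ℕ) : mu18 {a} = 2⁻¹ ^ a := by
  simp [mu18]

lemma mu18_pair {a b : ℕ} (h : a ≠ b) : mu18 {a, b} = 2 * (2⁻¹ ^ a + 2⁻¹ ^ b) := by
  have hfin : ({a, b} : Set ℕ).Finite := (Set.finite_singleton b).insert a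
  rw [mu18, if_pos hfin, Set.ncard_pair h, ← Finset.coe_pair, Finset.tsum_subtype',
    Finset.sum_pair h]
  norm_num

lemma one_le_mu18_one_pair (b : ℕ) (hb : b ≠ 1) : 1 ≤ mu18 {1, b} := by
  rw [mu18_pair hb.symm, pow_one, mul_add, ENNReal.mul_inv_cancel two_ne_zero ofNat_ne_top]
  exact le_self_add

/-- With `f := M₀·χ_{{1}}` and `f_n := M₀·χ_{{1,n+1}}` (`n ≥ 1`, here indexed by
`n ↦ {1, n+2}`), one has `(f_n-f)_{p,q} → 0`, `(f_n)_{p,q} = 1`, `(f)_{p,q} < 1`;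
hence the sphere `{g : (g)_{p,q} < 1}` is not open in the Sugeno-Lorentz topology. -/
theorem sphere_not_open (p q : ℝ) (hp : 0 < p) (hq : 0 < q) :
    Tendsto
        (fun n => SL mu18 p q
          (fun m => (({1, n + 2} : Set ℕ).indicator fun _ => (q / p) ^ (1 / q)) m -
            (({1} : Set ℕ).indicator fun _ => (q / p) ^ (1 / q)) m))
        atTop (𝓝 0) ∧
      (∀ n : ℕ, SL mu18 p q (({1, n + 2} : Set ℕ).indicator fun _ => (q / p) ^ (1 / q)) = 1) ∧
      SL mu18 p q (({1} : Set ℕ).indicator fun _ => (q / p) ^ (1 / q)) < 1 ∧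
      ¬ (∀ g : ℕ → ℝ, SL mu18 p q g < 1 →
          ∃ r : ℝ≥0∞, 0 < r ∧
            ∀ h : ℕ → ℝ, SL mu18 p q (g - h) < r → SL mu18 p q h < 1) := by
  set M₀ := (q / p) ^ (1 / q)
  have hdiff (n : ℕ) : ({1, n + 2} : Set ℕ).indicator (fun _ => M₀) - ({1} : Set ℕ).indicator
      (fun _ => M₀) = ({n + 2} : Set ℕ).indicator fun _ => M₀ := by
    rw [← Set.indicator_sdiff (by simp), Set.insert_sdiff_self_of_notMem (by simp)]
  have htend : Tendsto (fun n => SL mu18 p q (({1, n + 2} : Set ℕ).indicator (fun _ => M₀) -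
      ({1} : Set ℕ).indicator fun _ => M₀)) atTop (𝓝 0) := by
    simp_rw [hdiff]
    refine tendsto_SL_indicator_zero hp hq mu18_empty ?_
    simp_rw [mu18_singleton]
    exact (ENNReal.tendsto_pow_atTop_nhds_zero_of_lt_one (by norm_num)).comp
      (tendsto_add_atTop_nat 2)
  have hone (n : ℕ) : SL mu18 p q (({1, n + 2} : Set ℕ).indicator fun _ => M₀) = 1 :=
    SL_indicator_eq_one hp hq mu18_empty (one_le_mu18_one_pair _ (by omega))
  have hlt : SL mu18 p q (({1} : Set ℕ).indicator fun _ => M₀) < 1 :=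
    SL_indicator_lt_one hp hq mu18_empty (by rw [mu18_singleton]; norm_num)
  exact ⟨htend, hone, hlt, not_isSLOpen_of_tendsto (G := {g | SL mu18 p q g < 1}) htend
    (fun n => by simp [hone n]) hlt⟩
end
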